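/- For $1 < p < \infty$, $0 < \lambda < n$, nonnegative $f \in L^{p,\lambda}(\mathbb{R}^n)$ and nonnegative $g \in H^{p',\lambda}(\mathbb{R}^n)$ with $1/p + 1/p' = 1$, one has $\int_{\mathbb{R}^n} f(x) g(x)\,dx \le C\,\|f\|_{L^{p,\lambda}} \|g\|_{H^{p',\lambda}}$ with constant $C$ depending only on $n, p, \lambda$. -/

import Mathlib

open MeasureTheory ENNReal Set

noncomputable section

/-- Axis-parallel cube with lower corner `c` and side length `h`. -/
def Cube (n : ℕ) (c : Fin n → ℝ) (h : ℝ) : Set (Fin n → ℝ) :=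
  {x | ∀ i, c i ≤ x i ∧ x i ≤ c i + h}

/-- `λ`-dimensional Hausdorff content, via countable coverings by cubes. -/
def hausdorffContent (n : ℕ) (lam : ℝ) (E : Set (Fin n → ℝ)) : ℝ≥0∞ :=
  ⨅ (c : ℕ → Fin n → ℝ) (h : ℕ → ℝ) (_ : ∀ j, 0 < h j)
    (_ : E ⊆ ⋃ j, Cube n (c j) (h j)), ∑' j, ENNReal.ofReal (h j) ^ lam

/-- Choquet integral of an `ℝ≥0∞`-valued function against the Hausdorff content `H^λ`. -/
def choquetE (n : ℕ) (lam : ℝ) (φ : (Fin n → ℝ) → ℝ≥0∞) : ℝ≥0∞ :=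
  ∫⁻ t in Set.Ioi (0:ℝ), hausdorffContent n lam {y | ENNReal.ofReal t < φ y}

/-- Choquet integral of a real-valued function against the Hausdorff content `H^λ`. -/
def choquet (n : ℕ) (lam : ℝ) (φ : (Fin n → ℝ) → ℝ) : ℝ≥0∞ :=
  ∫⁻ t in Set.Ioi (0:ℝ), hausdorffContent n lam {y | t < φ y}

/-- The Morrey norm `‖f‖_{L^{p,λ}}`. -/
def morreyNorm (n : ℕ) (p lam : ℝ) (f : (Fin n → ℝ) → ℝ) : ℝ≥0∞ :=
  ⨆ (c : Fin n → ℝ) (h : ℝ) (_ : 0 < h),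
    ((∫⁻ x in Cube n c h, ENNReal.ofReal |f x| ^ p) / ENNReal.ofReal h ^ lam) ^ (1/p)

/-- The weighted Morrey norm of an `ℝ≥0∞`-valued function. -/
def morreyNormWE (n : ℕ) (p lam : ℝ) (w : (Fin n → ℝ) → ℝ) (f : (Fin n → ℝ) → ℝ≥0∞) : ℝ≥0∞ :=
  ⨆ (c : Fin n → ℝ) (h : ℝ) (_ : 0 < h),
    ((∫⁻ x in Cube n c h, f x ^ p * ENNReal.ofReal (w x)) / ENNReal.ofReal h ^ lam) ^ (1/p)

/-- The weighted Morrey norm `‖f‖_{L^{p,λ}(w)}`. -/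
def morreyNormW (n : ℕ) (p lam : ℝ) (w f : (Fin n → ℝ) → ℝ) : ℝ≥0∞ :=
  morreyNormWE n p lam w (fun x => ENNReal.ofReal |f x|)

/-- The Hardy–Littlewood maximal operator (over axis-parallel cubes). -/
def maximalFn (n : ℕ) (f : (Fin n → ℝ) → ℝ) (x : Fin n → ℝ) : ℝ≥0∞ :=
  ⨆ (c : Fin n → ℝ) (h : ℝ) (_ : 0 < h) (_ : x ∈ Cube n c h),
    (∫⁻ y in Cube n c h, ENNReal.ofReal |f y|) / ENNReal.ofReal (h ^ n)

/-- A weight: a nonnegative locally integrable function positive on a set of positive measure. -/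
def IsWeight (n : ℕ) (w : (Fin n → ℝ) → ℝ) : Prop :=
  Measurable w ∧ (∀ x, 0 ≤ w x) ∧ LocallyIntegrable w volume ∧ 0 < volume {x | 0 < w x}

/-- Muckenhoupt `A₁` weight with constant `C`. -/
def IsA1 (n : ℕ) (C : ℝ≥0∞) (w : (Fin n → ℝ) → ℝ) : Prop :=
  IsWeight n w ∧ ∀ᵐ x ∂(volume : Measure (Fin n → ℝ)), maximalFn n w x ≤ C * ENNReal.ofReal (w x)

/-- The basis `𝓑_λ`: `A₁` weights with Choquet integral against `H^λ` at most one. -/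
def MorreyBasis (n : ℕ) (lam : ℝ) : Set ((Fin n → ℝ) → ℝ) :=
  {b | (∃ C : ℝ≥0∞, C ≠ ⊤ ∧ IsA1 n C b) ∧ choquet n lam b ≤ 1}

/-- The norm of the space `H^{q,λ}`; note `b^{-q/q'} = b^{-(q-1)}`. -/
def hNorm (n : ℕ) (q lam : ℝ) (g : (Fin n → ℝ) → ℝ) : ℝ≥0∞ :=
  ⨅ (b : (Fin n → ℝ) → ℝ) (_ : b ∈ MorreyBasis n lam),
    (∫⁻ x, ENNReal.ofReal |g x| ^ q * ENNReal.ofReal (b x) ^ (-(q - 1))) ^ (1/q)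
/-- Euclidean norm on `Fin n → ℝ`. -/
def euclidNorm (n : ℕ) (x : Fin n → ℝ) : ℝ := Real.sqrt (∑ i, x i ^ 2)

/-- A `(p,λ)`-atom: supported in a cube `Q` with `‖a‖_{L^p} ≤ l(Q)^{-λ/p'}`. -/
def IsPLAtom (n : ℕ) (p lam : ℝ) (a : (Fin n → ℝ) → ℝ) : Prop :=
  Measurable a ∧ ∃ (c : Fin n → ℝ) (h : ℝ), 0 < h ∧ (∀ x ∉ Cube n c h, a x = 0) ∧
    (∫⁻ x, ENNReal.ofReal |a x| ^ p) ^ (1/p) ≤ ENNReal.ofReal h ^ (-(lam * (p - 1) / p))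

/-- The block space norm `‖f‖_{B^{p,λ}}`. -/
def blockNorm (n : ℕ) (p lam : ℝ) (f : (Fin n → ℝ) → ℝ) : ℝ≥0∞ :=
  ⨅ (cs : ℕ → ℝ) (a : ℕ → (Fin n → ℝ) → ℝ) (_ : ∀ k, IsPLAtom n p lam (a k))
    (_ : ∀ x, HasSum (fun k => cs k * a k x) (f x)),
    ∑' k, ENNReal.ofReal |cs k|

/-- The dyadic cube `2^{-k}(m + [0,1)^n)`. -/
def DCube (n : ℕ) (k : ℤ) (m : Fin n → ℤ) : Set (Fin n → ℝ) :=
  {x | ∀ i, (m i : ℝ) * (2:ℝ) ^ (-k) ≤ x i ∧ x i < ((m i : ℝ) + 1) * (2:ℝ) ^ (-k)}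

/-- The dyadic maximal operator with respect to a measure `μ`. -/
def dyadicMaximal (n : ℕ) (μ : Measure (Fin n → ℝ)) (f : (Fin n → ℝ) → ℝ)
    (x : Fin n → ℝ) : ℝ≥0∞ :=
  ⨆ (k : ℤ) (m : Fin n → ℤ) (_ : x ∈ DCube n k m),
    (∫⁻ y in DCube n k m, ENNReal.ofReal |f y| ∂μ) / μ (DCube n k m)

/-- The `L^p(μ)`-norm (with `p ∈ (0,∞]`) of an `ℝ≥0∞`-valued function. -/
def lpNormE {α : Type*} [MeasurableSpace α] (μ : Measure α) (p : ℝ≥0∞) (g : α → ℝ≥0∞) : ℝ≥0∞ :=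
  if p = ⊤ then essSup g μ else (∫⁻ x, g x ^ p.toReal ∂μ) ^ (1 / p.toReal)

/-- Content normalized on balls: the infimum of `ρ^λ` over balls `{|x| < ρ}` containing `E`. -/
def ballContent (n : ℕ) (lam : ℝ) (E : Set (Fin n → ℝ)) : ℝ≥0∞ :=
  ⨅ (ρ : ℝ) (_ : 0 ≤ ρ) (_ : E ⊆ {x | euclidNorm n x < ρ}), ENNReal.ofReal ρ ^ lam

/-- Choquet integral against the ball-normalized content. -/
def ballChoquet (n : ℕ) (lam : ℝ) (φ : (Fin n → ℝ) → ℝ) : ℝ≥0∞ :=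
  ∫⁻ t in Set.Ioi (0:ℝ), ballContent n lam {y | t < φ y}

/-- The `μ`-average of `g` over a dyadic cube (indexed by a pair `(k,m)`). -/
def dAvg (n : ℕ) (μ : Measure (Fin n → ℝ)) (g : (Fin n → ℝ) → ℝ)
    (Q : ℤ × (Fin n → ℤ)) : ℝ≥0∞ :=
  (∫⁻ y in DCube n Q.1 Q.2, ENNReal.ofReal (g y) ∂μ) / μ (DCube n Q.1 Q.2)

/-- `Q` is a stopping child of `F`: a maximal dyadic cube inside `F` whose `μ`-average of `g`
exceeds twice that of `F`. -/
def IsPChild (n : ℕ) (μ : Measure (Fin n → ℝ)) (g : (Fin n → ℝ) → ℝ)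
    (F Q : ℤ × (Fin n → ℤ)) : Prop :=
  DCube n Q.1 Q.2 ⊆ DCube n F.1 F.2 ∧ 2 * dAvg n μ g F < dAvg n μ g Q ∧
    ∀ Q' : ℤ × (Fin n → ℤ), DCube n Q.1 Q.2 ⊆ DCube n Q'.1 Q'.2 →
      DCube n Q'.1 Q'.2 ⊆ DCube n F.1 F.2 → 2 * dAvg n μ g F < dAvg n μ g Q' →
      DCube n Q'.1 Q'.2 = DCube n Q.1 Q.2

/-- The collection of principal cubes generated from `Q0`. -/
inductive Principal (n : ℕ) (μ : Measure (Fin n → ℝ)) (g : (Fin n → ℝ) → ℝ)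
    (Q0 : ℤ × (Fin n → ℤ)) : ℤ × (Fin n → ℤ) → Prop
  | base : Principal n μ g Q0 Q0
  | child (F Q : ℤ × (Fin n → ℤ)) : Principal n μ g Q0 F → IsPChild n μ g F Q →
      Principal n μ g Q0 Q

/-- The set `E_𝓕(F) = F \ ⋃_{F' ∈ ch_𝓕(F)} F'`. -/
def PrincipalRest (n : ℕ) (μ : Measure (Fin n → ℝ)) (g : (Fin n → ℝ) → ℝ)
    (F : ℤ × (Fin n → ℤ)) : Set (Fin n → ℝ) :=
  DCube n F.1 F.2 \ ⋃ (Q : ℤ × (Fin n → ℤ)) (_ : IsPChild n μ g F Q), DCube n Q.1 Q.2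

/-!
For every `b ∈ 𝓑_λ`, Hölder's inequality applied to `f g = (f b^{1/p}) (g b^{-1/p})` gives
`∫ f g ≤ (∫ f^p b)^{1/p} (∫ g^{p'} b^{1-p'})^{1/p'}`. The measure `f^p dx` gives every cube `Q`
mass at most `‖f‖^p l(Q)^λ`, hence every set `E` mass at most `‖f‖^p H^λ(E)`, and by the
layer-cake formula `∫ f^p b ≤ ‖f‖^p ∫ b dH^λ ≤ ‖f‖^p`. Taking the infimum over `b` gives the
inequality with `C = 1`.

If `‖f‖ = ∞`, one needs instead that `‖g‖_{H^{p',λ}} = 0` forces `g = 0` a.e.: since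
`|E| ≤ H^λ(E)^{n/λ}` and `H^λ{b > s} ≤ 1/s`, every `b ∈ 𝓑_λ` is bounded by one common `s`
outside a set of small measure, which bounds `∫ g^{p'} b^{1-p'}` below uniformly in `b`.
-/

lemma ENNReal.tsum_rpow_le_rpow_tsum {ι : Type*} (a : ι → ℝ≥0∞) {r : ℝ} (hr : 1 ≤ r) :
    ∑' i, a i ^ r ≤ (∑' i, a i) ^ r := by
  have hsplit : ∀ x : ℝ≥0∞, x ^ r = x ^ (r - 1) * x := fun x => by
    conv_lhs => rw [← sub_add_cancel r 1]
    rw [rpow_add_of_nonneg _ _ (sub_nonneg.2 hr) zero_le_one, rpow_one]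
  calc ∑' i, a i ^ r = ∑' i, a i ^ (r - 1) * a i := tsum_congr fun i => hsplit _
    _ ≤ ∑' i, (∑' j, a j) ^ (r - 1) * a i := by
        gcongr with i
        exact ENNReal.le_tsum i
    _ = (∑' i, a i) ^ r := by rw [ENNReal.tsum_mul_left, hsplit]

lemma cube_eq_pi (n : ℕ) (c : Fin n → ℝ) (h : ℝ) :
    Cube n c h = Set.pi univ fun i => Icc (c i) (c i + h) := by
  ext x
  simp [Cube, Pi.le_def, forall_and]

lemma measurableSet_cube (n : ℕ) (c : Fin n → ℝ) (h : ℝ) : MeasurableSet (Cube n c h) := by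
  rw [cube_eq_pi]
  exact MeasurableSet.univ_pi fun _ => measurableSet_Icc

lemma volume_cube (n : ℕ) (c : Fin n → ℝ) (h : ℝ) :
    volume (Cube n c h) = ENNReal.ofReal h ^ n := by
  rw [cube_eq_pi, volume_pi_pi]
  simp [Real.volume_Icc]

lemma iUnion_cube_eq_univ (n : ℕ) :
    ⋃ k : ℕ, Cube n (fun _ => -((k : ℝ) + 1)) (2 * ((k : ℝ) + 1)) = univ := by
  refine eq_univ_of_forall fun x => ?_
  obtain ⟨k, hk⟩ := exists_nat_gt ‖x‖
  refine mem_iUnion.2 ⟨k, fun i => ?_⟩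
  have hxi : |x i| < k + 1 := (norm_le_pi_norm x i).trans_lt (by linarith)
  rw [abs_lt] at hxi
  constructor <;> linarith

lemma hausdorffContent_mono {n : ℕ} {lam : ℝ} {S T : Set (Fin n → ℝ)} (hST : S ⊆ T) :
    hausdorffContent n lam S ≤ hausdorffContent n lam T :=
  le_iInf₂ fun c h => le_iInf₂ fun hpos hcov =>
    iInf₂_le_of_le c h (iInf₂_le hpos (hST.trans hcov))

lemma volume_rpow_le_hausdorffContent {n : ℕ} {lam : ℝ} (hlam : 0 < lam) (hlamn : lam ≤ n)
    (S : Set (Fin n → ℝ)) : volume S ^ (lam / n) ≤ hausdorffContent n lam S := by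
  have hn : (0 : ℝ) < n := hlam.trans_le hlamn
  refine le_iInf₂ fun c h => le_iInf₂ fun _ hcov => ?_
  have hvol : volume S ≤ (∑' j, ENNReal.ofReal (h j) ^ lam) ^ (n / lam) :=
    calc volume S ≤ ∑' j, volume (Cube n (c j) (h j)) :=
          (measure_mono hcov).trans (measure_iUnion_le _)
      _ = ∑' j, (ENNReal.ofReal (h j) ^ lam) ^ (n / lam) := by
          refine tsum_congr fun j => ?_
          rw [volume_cube, ← rpow_natCast, ← rpow_mul, mul_div_cancel₀ _ hlam.ne']
      _ ≤ _ := ENNReal.tsum_rpow_le_rpow_tsum _ ((one_le_div hlam).2 hlamn)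
  calc volume S ^ (lam / n) ≤ ((∑' j, ENNReal.ofReal (h j) ^ lam) ^ (n / lam)) ^ (lam / n) := by
        gcongr
    _ = ∑' j, ENNReal.ofReal (h j) ^ lam := by
        rw [← rpow_mul, show n / lam * (lam / n) = (1 : ℝ) by field_simp, rpow_one]

lemma measure_le_mul_hausdorffContent {n : ℕ} {lam : ℝ} {μ : Measure (Fin n → ℝ)} {K : ℝ≥0∞}
    (hK : K ≠ ⊤) (hμ : ∀ c h, 0 < h → μ (Cube n c h) ≤ K * ENNReal.ofReal h ^ lam)
    (S : Set (Fin n → ℝ)) : μ S ≤ K * hausdorffContent n lam S := by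
  rcases eq_or_ne K 0 with rfl | hK0
  · rw [zero_mul, nonpos_iff_eq_zero]
    refine measure_mono_null (subset_univ S) ?_
    rw [← iUnion_cube_eq_univ]
    exact measure_iUnion_null fun k => by simpa using hμ _ _ (by positivity)
  simp only [hausdorffContent, mul_iInf_of_ne hK0 hK]
  refine le_iInf₂ fun c h => le_iInf₂ fun hpos hcov => ?_
  calc μ S ≤ ∑' j, μ (Cube n (c j) (h j)) := (measure_mono hcov).trans (measure_iUnion_le _)
    _ ≤ ∑' j, K * ENNReal.ofReal (h j) ^ lam := ENNReal.tsum_le_tsum fun j => hμ _ _ (hpos j)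
    _ = K * ∑' j, ENNReal.ofReal (h j) ^ lam := ENNReal.tsum_mul_left

lemma ofReal_mul_hausdorffContent_le_choquet {n : ℕ} {lam : ℝ} (φ : (Fin n → ℝ) → ℝ) (s : ℝ) :
    ENNReal.ofReal s * hausdorffContent n lam {y | s < φ y} ≤ choquet n lam φ :=
  calc ENNReal.ofReal s * hausdorffContent n lam {y | s < φ y}
      = ∫⁻ _ in Ioc 0 s, hausdorffContent n lam {y | s < φ y} := by
        rw [setLIntegral_const, Real.volume_Ioc, sub_zero, mul_comm]
    _ ≤ ∫⁻ t in Ioc 0 s, hausdorffContent n lam {y | t < φ y} :=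
        setLIntegral_mono' measurableSet_Ioc fun t ht =>
          hausdorffContent_mono fun y hy => ht.2.trans_lt hy
    _ ≤ choquet n lam φ := lintegral_mono_set Ioc_subset_Ioi_self

lemma lintegral_le_mul_choquet {n : ℕ} {lam : ℝ} {μ : Measure (Fin n → ℝ)} {K : ℝ≥0∞}
    (hμ : ∀ S, μ S ≤ K * hausdorffContent n lam S) {φ : (Fin n → ℝ) → ℝ}
    (hφ : Measurable φ) (hφ0 : ∀ x, 0 ≤ φ x) :
    ∫⁻ x, ENNReal.ofReal (φ x) ∂μ ≤ K * choquet n lam φ := by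
  have hanti : Antitone fun t : ℝ => hausdorffContent n lam {y | t < φ y} :=
    fun _ _ hst => hausdorffContent_mono fun _ hy => hst.trans_lt hy
  rw [lintegral_eq_lintegral_meas_lt μ (Filter.Eventually.of_forall hφ0) hφ.aemeasurable, choquet,
    ← lintegral_const_mul _ hanti.measurable]
  exact lintegral_mono fun _ => hμ _

lemma setLIntegral_cube_le_morreyNorm_rpow_mul {n : ℕ} {p lam : ℝ} (hp : 0 < p)
    (f : (Fin n → ℝ) → ℝ) (c : Fin n → ℝ) {h : ℝ} (hh : 0 < h) :
    ∫⁻ x in Cube n c h, ENNReal.ofReal |f x| ^ p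
      ≤ morreyNorm n p lam f ^ p * ENNReal.ofReal h ^ lam := by
  have hle : ((∫⁻ x in Cube n c h, ENNReal.ofReal |f x| ^ p) / ENNReal.ofReal h ^ lam) ^ (1 / p)
      ≤ morreyNorm n p lam f :=
    le_iSup₂_of_le c h (le_iSup_of_le hh le_rfl)
  have hh' : 0 < ENNReal.ofReal h := ENNReal.ofReal_pos.2 hh
  rwa [one_div, rpow_inv_le_iff hp, ENNReal.div_le_iff (rpow_pos hh' ofReal_ne_top).ne'
    (rpow_ne_top_of_ne_zero hh'.ne' ofReal_ne_top)] at hle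

lemma withDensity_le_morreyNorm_rpow_mul_hausdorffContent {n : ℕ} {p lam : ℝ} (hp : 0 < p)
    {f : (Fin n → ℝ) → ℝ} (hM : morreyNorm n p lam f ≠ ⊤) (S : Set (Fin n → ℝ)) :
    volume.withDensity (fun x => ENNReal.ofReal |f x| ^ p) S
      ≤ morreyNorm n p lam f ^ p * hausdorffContent n lam S := by
  refine measure_le_mul_hausdorffContent (rpow_ne_top_of_nonneg hp.le hM) (fun c h hh => ?_) S
  rw [withDensity_apply _ (measurableSet_cube n c h)]
  exact setLIntegral_cube_le_morreyNorm_rpow_mul hp f c hh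

lemma ae_eq_zero_of_morreyNorm_eq_zero {n : ℕ} {p lam : ℝ} (hp : 0 < p)
    {f : (Fin n → ℝ) → ℝ} (hf : Measurable f) (hM : morreyNorm n p lam f = 0) :
    f =ᵐ[volume] 0 := by
  have h := withDensity_le_morreyNorm_rpow_mul_hausdorffContent hp (hM ▸ zero_ne_top) univ
  rw [hM, zero_rpow_of_pos hp, zero_mul, nonpos_iff_eq_zero, withDensity_apply _ MeasurableSet.univ,
    Measure.restrict_univ, lintegral_eq_zero_iff (hf.abs.ennreal_ofReal.pow_const p)] at h
  filter_upwards [h] with x hx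
  simpa [hp, hp.not_gt] using hx

lemma lintegral_rpow_mul_le_morreyNorm_rpow_mul_choquet {n : ℕ} {p lam : ℝ} (hp : 0 < p)
    {f b : (Fin n → ℝ) → ℝ} (hM : morreyNorm n p lam f ≠ ⊤) (hf : Measurable f)
    (hb : Measurable b) (hb0 : ∀ x, 0 ≤ b x) :
    ∫⁻ x, ENNReal.ofReal |f x| ^ p * ENNReal.ofReal (b x)
      ≤ morreyNorm n p lam f ^ p * choquet n lam b :=
  calc ∫⁻ x, ENNReal.ofReal |f x| ^ p * ENNReal.ofReal (b x)
      = ∫⁻ x, ENNReal.ofReal (b x) ∂volume.withDensity (fun x => ENNReal.ofReal |f x| ^ p) :=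
        (lintegral_withDensity_eq_lintegral_mul _ (hf.abs.ennreal_ofReal.pow_const p)
          hb.ennreal_ofReal).symm
    _ ≤ _ := lintegral_le_mul_choquet
        (withDensity_le_morreyNorm_rpow_mul_hausdorffContent hp hM) hb hb0

lemma ENNReal.mul_le_mul_rpow_mul_mul_rpow_neg {a c w : ℝ≥0∞} (r : ℝ) (hw : w ≠ ⊤)
    (h : w ≠ 0 ∨ c = 0) : a * c ≤ a * w ^ r * (c * w ^ (-r)) := by
  rcases h with hw0 | rfl
  · rw [mul_mul_mul_comm, ← rpow_add _ _ hw0 hw, add_neg_cancel, rpow_zero, mul_one]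
  · simp

lemma ENNReal.lintegral_mul_le_weighted_Lp_mul_Lq {α : Type*} [MeasurableSpace α] (μ : Measure α)
    {p q : ℝ} (hpq : p.HolderConjugate q) {F G w : α → ℝ≥0∞} (hF : AEMeasurable F μ)
    (hG : AEMeasurable G μ) (hw : AEMeasurable w μ) (hw_top : ∀ x, w x ≠ ⊤)
    (hJ : ∫⁻ x, G x ^ q * w x ^ (-(q - 1)) ∂μ ≠ ⊤) :
    ∫⁻ x, F x * G x ∂μ
      ≤ (∫⁻ x, F x ^ p * w x ∂μ) ^ (1 / p) * (∫⁻ x, G x ^ q * w x ^ (-(q - 1)) ∂μ) ^ (1 / q) := by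
  -- `hJ` forces `G = 0` almost everywhere on `{w = 0}`.
  have hsplit : ∀ᵐ x ∂μ, F x * G x ≤ F x * w x ^ (1 / p) * (G x * w x ^ (-(1 / p))) := by
    filter_upwards [ae_lt_top' ((hG.pow_const q).mul (hw.pow_const _)) hJ] with x hx
    refine mul_le_mul_rpow_mul_mul_rpow_neg _ (hw_top x) (or_iff_not_imp_left.2 fun hwx => ?_)
    rw [Pi.mul_apply, not_ne_iff.1 hwx, zero_rpow_of_neg (by linarith [hpq.symm.sub_one_pos])] at hx
    simpa [mul_lt_top_iff, hpq.symm.pos, hpq.symm.pos.not_gt] using hx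
  have hF_pow : ∀ x, (F x * w x ^ (1 / p)) ^ p = F x ^ p * w x := fun x => by
    rw [mul_rpow_of_nonneg _ _ hpq.nonneg, ← rpow_mul, one_div_mul_cancel hpq.ne_zero, rpow_one]
  have hG_pow : ∀ x, (G x * w x ^ (-(1 / p))) ^ q = G x ^ q * w x ^ (-(q - 1)) := fun x => by
    rw [mul_rpow_of_nonneg _ _ hpq.symm.nonneg, ← rpow_mul, ← hpq.symm.div_conj_eq_sub_one]
    ring_nf
  calc ∫⁻ x, F x * G x ∂μ
      ≤ ∫⁻ x, F x * w x ^ (1 / p) * (G x * w x ^ (-(1 / p))) ∂μ := lintegral_mono_ae hsplit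
    _ ≤ (∫⁻ x, (F x * w x ^ (1 / p)) ^ p ∂μ) ^ (1 / p)
          * (∫⁻ x, (G x * w x ^ (-(1 / p))) ^ q ∂μ) ^ (1 / q) :=
        lintegral_mul_le_Lp_mul_Lq _ hpq (hF.mul (hw.pow_const _)) (hG.mul (hw.pow_const _))
    _ = _ := by simp_rw [hF_pow, hG_pow]

lemma lintegral_mul_le_morreyNorm_mul {n : ℕ} {p q lam : ℝ} (hpq : p.HolderConjugate q)
    {f g b : (Fin n → ℝ) → ℝ} (hM0 : morreyNorm n p lam f ≠ 0) (hM : morreyNorm n p lam f ≠ ⊤)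
    (hf : Measurable f) (hg : Measurable g) (hf0 : ∀ x, 0 ≤ f x) (hg0 : ∀ x, 0 ≤ g x)
    (hb : Measurable b) (hb0 : ∀ x, 0 ≤ b x) (hcho : choquet n lam b ≤ 1) :
    ∫⁻ x, ENNReal.ofReal (f x) * ENNReal.ofReal (g x)
      ≤ morreyNorm n p lam f *
        (∫⁻ x, ENNReal.ofReal |g x| ^ q * ENNReal.ofReal (b x) ^ (-(q - 1))) ^ (1 / q) := by
  have hkey := lintegral_rpow_mul_le_morreyNorm_rpow_mul_choquet hpq.pos hM hf hb hb0
  simp only [abs_of_nonneg (hf0 _), abs_of_nonneg (hg0 _)] at hkey ⊢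
  set M := morreyNorm n p lam f
  set I := ∫⁻ x, ENNReal.ofReal (g x) ^ q * ENNReal.ofReal (b x) ^ (-(q - 1))
  rcases eq_or_ne I ⊤ with hI | hI
  · rw [hI, top_rpow_of_pos hpq.symm.one_div_pos, mul_top hM0]
    exact le_top
  calc ∫⁻ x, ENNReal.ofReal (f x) * ENNReal.ofReal (g x)
      ≤ (∫⁻ x, ENNReal.ofReal (f x) ^ p * ENNReal.ofReal (b x)) ^ (1 / p) * I ^ (1 / q) :=
        ENNReal.lintegral_mul_le_weighted_Lp_mul_Lq _ hpq hf.ennreal_ofReal.aemeasurable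
          hg.ennreal_ofReal.aemeasurable hb.ennreal_ofReal.aemeasurable (fun _ => ofReal_ne_top) hI
    _ ≤ (M ^ p * 1) ^ (1 / p) * I ^ (1 / q) := by
        gcongr ?_ * _
        exact rpow_le_rpow (hkey.trans (by gcongr)) hpq.one_div_nonneg
    _ = M * I ^ (1 / q) := by
        rw [mul_one, ← rpow_mul, mul_one_div_cancel hpq.ne_zero, rpow_one]

lemma volume_lt_rpow_le_inv_of_choquet_le_one {n : ℕ} {lam : ℝ} (hlam : 0 < lam) (hlamn : lam ≤ n)
    {b : (Fin n → ℝ) → ℝ} (hcho : choquet n lam b ≤ 1) (s : ℝ) :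
    volume {x | s < b x} ^ (lam / n) ≤ (ENNReal.ofReal s)⁻¹ :=
  (volume_rpow_le_hausdorffContent hlam hlamn _).trans <| ENNReal.le_inv_iff_mul_le.2 <| by
    rw [mul_comm]
    exact (ofReal_mul_hausdorffContent_le_choquet b s).trans hcho

lemma exists_pos_measure_lt_ne_zero {α : Type*} [MeasurableSpace α] {μ : Measure α} {g : α → ℝ}
    (hg0 : ∀ x, 0 ≤ g x) (hg : ¬ g =ᵐ[μ] 0) : ∃ ε > 0, μ {x | ε < g x} ≠ 0 := by
  by_contra! h
  refine hg (ae_iff.2 (measure_mono_null (fun x (hx : g x ≠ 0) => ?_)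
    (measure_iUnion_null fun k : ℕ => h (1 / (k + 1)) Nat.one_div_pos_of_nat)))
  obtain ⟨k, hk⟩ := exists_nat_one_div_lt ((hg0 x).lt_of_ne (Ne.symm hx))
  exact mem_iUnion.2 ⟨k, hk⟩

lemma ae_eq_zero_of_hNorm_eq_zero {n : ℕ} {q lam : ℝ} (hq : 1 ≤ q) (hlam : 0 < lam)
    (hlamn : lam ≤ n) {g : (Fin n → ℝ) → ℝ} (hg : Measurable g) (hg0 : ∀ x, 0 ≤ g x)
    (hH : hNorm n q lam g = 0) : g =ᵐ[volume] 0 := by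
  by_contra hne
  obtain ⟨ε, hε, hE⟩ := exists_pos_measure_lt_ne_zero hg0 hne
  set E := {x | ε < g x}
  obtain ⟨c, hc0, hcE⟩ := exists_between (pos_iff_ne_zero.2 hE)
  obtain ⟨N, hN⟩ := exists_inv_nat_lt (rpow_pos hc0 hcE.ne_top).ne' (a := c ^ (lam / n))
  have hN0 : (N : ℝ≥0∞) ≠ 0 := by
    rintro h
    simp [h] at hN
  have hsmall : ∀ b : (Fin n → ℝ) → ℝ, choquet n lam b ≤ 1 → volume {x | (N : ℝ) < b x} ≤ c :=
    fun b hcho => by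
      rw [← rpow_le_rpow_iff (div_pos hlam (hlam.trans_le hlamn))]
      calc _ ≤ (ENNReal.ofReal N)⁻¹ := volume_lt_rpow_le_inv_of_choquet_le_one hlam hlamn hcho _
        _ ≤ c ^ (lam / n) := by rw [ofReal_natCast]; exact hN.le
  set δ := ENNReal.ofReal ε ^ q * (N : ℝ≥0∞) ^ (-(q - 1)) * (volume E - c)
  have hδ : δ ≠ 0 := mul_ne_zero (mul_ne_zero (rpow_pos (ofReal_pos.2 hε) ofReal_ne_top).ne'
    (rpow_pos (pos_iff_ne_zero.2 hN0) (natCast_ne_top N)).ne') (tsub_pos_of_lt hcE).ne'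
  have hlow : ∀ b ∈ MorreyBasis n lam,
      δ ≤ ∫⁻ x, ENNReal.ofReal |g x| ^ q * ENNReal.ofReal (b x) ^ (-(q - 1)) := by
    rintro b ⟨⟨-, -, ⟨hb, -⟩, -⟩, hcho⟩
    set A := E \ {x | (N : ℝ) < b x}
    calc δ ≤ ENNReal.ofReal ε ^ q * (N : ℝ≥0∞) ^ (-(q - 1)) * volume A := by
          dsimp only [δ]
          gcongr
          exact (tsub_le_tsub_left (hsmall b hcho) _).trans le_measure_sdiff
      _ = ∫⁻ _ in A, ENNReal.ofReal ε ^ q * (N : ℝ≥0∞) ^ (-(q - 1)) := (setLIntegral_const _ _).symm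
      _ ≤ ∫⁻ x in A, ENNReal.ofReal |g x| ^ q * ENNReal.ofReal (b x) ^ (-(q - 1)) := by
          refine setLIntegral_mono (by fun_prop) fun x ⟨hxE, hxb⟩ => ?_
          rw [rpow_neg, rpow_neg, ← ofReal_natCast]
          gcongr
          · exact hxE.le.trans (le_abs_self _)
          · exact not_lt.1 hxb
      _ ≤ _ := setLIntegral_le_lintegral _ _
  have hδH : δ ^ (1 / q) ≤ hNorm n q lam g :=
    le_iInf₂ fun b hb => rpow_le_rpow (hlow b hb) (by positivity)
  rw [hH, nonpos_iff_eq_zero, rpow_eq_zero_iff_of_pos (by positivity)] at hδH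
  exact hδ hδH

/-- Hölder-type inequality `∫ f g ≤ C ‖f‖_{L^{p,λ}} ‖g‖_{H^{p',λ}}`. -/
theorem morrey_hNorm_holder (n : ℕ) (p lam : ℝ) (hp : 1 < p) (h1 : 0 < lam) (h2 : lam < n) :
    ∃ C : ℝ≥0∞, 0 < C ∧ C ≠ ⊤ ∧ ∀ f g : (Fin n → ℝ) → ℝ,
      Measurable f → Measurable g → (∀ x, 0 ≤ f x) → (∀ x, 0 ≤ g x) →
      ∫⁻ x, ENNReal.ofReal (f x) * ENNReal.ofReal (g x)
        ≤ C * (morreyNorm n p lam f * hNorm n (p/(p-1)) lam g) := by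
  have hpq : p.HolderConjugate (p / (p - 1)) := (Real.holderConjugate_iff_eq_conjExponent hp).2 rfl
  refine ⟨1, one_pos, one_ne_top, fun f g hf hg hf0 hg0 => ?_⟩
  rw [one_mul]
  have lintegral_eq_zero : f =ᵐ[volume] 0 ∨ g =ᵐ[volume] 0 →
      ∫⁻ x, ENNReal.ofReal (f x) * ENNReal.ofReal (g x) = 0 := by
    rintro (h | h) <;>
      exact (lintegral_congr_ae (h.mono fun x hx => by simp [hx])).trans lintegral_zero
  set M := morreyNorm n p lam f
  rcases eq_or_ne M 0 with hM0 | hM0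
  · simp [lintegral_eq_zero (.inl (ae_eq_zero_of_morreyNorm_eq_zero hpq.pos hf hM0))]
  rcases eq_or_ne M ⊤ with hMtop | hMtop
  · rcases eq_or_ne (hNorm n (p / (p - 1)) lam g) 0 with hH0 | hH0
    · have hg_ae := ae_eq_zero_of_hNorm_eq_zero hpq.symm.lt.le h1 h2.le hg hg0 hH0
      simp [lintegral_eq_zero (.inr hg_ae)]
    · simp [hMtop, top_mul hH0]
  simp only [hNorm, mul_iInf_of_ne hM0 hMtop]
  exact le_iInf₂ fun b ⟨⟨_, _, ⟨hb, hb0, _⟩, _⟩, hcho⟩ =>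
    lintegral_mul_le_morreyNorm_mul hpq hM0 hMtop hf hg hf0 hg0 hb hb0 hcho
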